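/- arXiv:math/0211424 — 3 statements merged into one kernel-verified Lean document; each statement's English description precedes it below -/
import Mathlib

section
/- For λ₁, λ₂, λ₃ ∈ [0, π], the identity matrix I belongs to the set product C(λ₁)C(λ₂)C(λ₃) in SU(2) if and only if |λ₁ − λ₂| ≤ λ₃ ≤ min(λ₁ + λ₂, 2π − (λ₁ + λ₂)). -/
open Matrix Complex Pointwise

/-- `SU(2)`: the subgroup of the unitary group `U(2)` (2×2 complex unitary matrices)
consisting of the matrices of determinant 1. -/
noncomputable def SU2 : Subgroup (Matrix.unitaryGroup (Fin 2) ℂ) :=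
  MonoidHom.ker (Matrix.detMonoidHom.comp (Submonoid.subtype _))

theorem mem_SU2_iff (A : Matrix.unitaryGroup (Fin 2) ℂ) :
    A ∈ SU2 ↔ Matrix.det (A : Matrix (Fin 2) (Fin 2) ℂ) = 1 := Iff.rfl

/-- The diagonal matrix `diag(e^{iλ}, e^{-iλ})` as an element of `SU(2)`. -/
noncomputable def su2diag (l : ℝ) : SU2 :=
  ⟨⟨Matrix.diagonal ![Complex.exp (l * Complex.I), Complex.exp (-(l * Complex.I))], by
    rw [Matrix.mem_unitaryGroup_iff]
    rw [Matrix.star_eq_conjTranspose, Matrix.diagonal_conjTranspose,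
      Matrix.diagonal_mul_diagonal]
    have h : (fun i => ![Complex.exp (l * Complex.I), Complex.exp (-(l * Complex.I))] i *
        star ![Complex.exp (l * Complex.I), Complex.exp (-(l * Complex.I))] i)
        = (1 : Fin 2 → ℂ) := by
      funext i
      fin_cases i <;>
        simp [Pi.star_apply, ← Complex.exp_conj, ← Complex.exp_add]
    rw [h]; exact Matrix.diagonal_one⟩, by
    rw [mem_SU2_iff]
    rw [Matrix.det_diagonal]
    simp [Fin.prod_univ_two, ← Complex.exp_add]⟩

/-- The conjugacy class `C(λ)` of `diag(e^{iλ}, e^{-iλ})` in `SU(2)`. -/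
noncomputable def conjClass (l : ℝ) : Set SU2 :=
  { g | ∃ h : SU2, h * su2diag l * h⁻¹ = g }

/-- The pointwise set product `C(λ₁)⋯C(λ_m)` of the conjugacy classes
`C(λ₁), …, C(λ_m)` in `SU(2)`. -/
noncomputable def classProd {m : ℕ} (l : Fin m → ℝ) : Set SU2 :=
  (List.ofFn fun i => conjClass (l i)).prod

/-!
The trace is a complete invariant of the classes `C(λ)`: if `tr g = 2 cos λ` then `e^{iλ}` is
an eigenvalue of `g`, and a unit eigenvector `(a, c)`, completed to `[[a, -c̄], [c, ā]] ∈ SU(2)`,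
conjugates `g` to `D(λ) = diag(e^{iλ}, e^{-iλ})`. Conjugating by the first factor,
`I ∈ C(λ₁)C(λ₂)C(λ₃)` iff `D(λ₁) k D(λ₂) k⁻¹` has trace `2 cos λ₃` for some `k ∈ SU(2)`.
This trace is `2((1 - t) cos(λ₁ - λ₂) + t cos(λ₁ + λ₂))` with `t = |k₀₀|²`,
which takes every value in `[0, 1]`.
So the condition is that `cos λ₃` lies between `cos(λ₁ + λ₂)` and `cos(λ₁ - λ₂)`, and since `cos`
is decreasing on `[0, π]` this is the stated pair of inequalities.
-/

open ComplexConjugate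

theorem ofReal_two_mul_cos (x : ℝ) :
    ((2 * Real.cos x : ℝ) : ℂ) = exp (x * I) + exp (-(x * I)) := by
  push_cast
  rw [two_cos, neg_mul]

theorem Matrix.trace_diagonal_mul_mul_diagonal_mul_conjTranspose {n : Type*} [Fintype n]
    [DecidableEq n] (d e : n → ℂ) (K : Matrix n n ℂ) :
    trace (diagonal d * K * diagonal e * Kᴴ) = ∑ i, ∑ j, d i * e j * normSq (K i j) := by
  refine Finset.sum_congr rfl fun i _ => Finset.sum_congr rfl fun j _ => ?_
  simp only [mul_diagonal, diagonal_mul, conjTranspose_apply, Complex.star_def, ← mul_conj]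
  ring

open Real in
theorem Real.cos_mem_segment_cos_sub_cos_add_iff {l₁ l₂ l₃ : ℝ} (h₁ : l₁ ∈ Set.Icc 0 π)
    (h₂ : l₂ ∈ Set.Icc 0 π) (h₃ : l₃ ∈ Set.Icc 0 π) :
    cos l₃ ∈ segment ℝ (cos (l₁ - l₂)) (cos (l₁ + l₂)) ↔
      |l₁ - l₂| ≤ l₃ ∧ l₃ ≤ min (l₁ + l₂) (2 * π - (l₁ + l₂)) := by
  obtain ⟨h₁0, h₁π⟩ := h₁
  obtain ⟨h₂0, h₂π⟩ := h₂
  have hle : cos (l₁ + l₂) ≤ cos (l₁ - l₂) := by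
    rw [cos_add, cos_sub]
    linarith [mul_nonneg (sin_nonneg_of_nonneg_of_le_pi h₁0 h₁π)
      (sin_nonneg_of_nonneg_of_le_pi h₂0 h₂π)]
  have habs : |l₁ - l₂| ∈ Set.Icc 0 π :=
    ⟨abs_nonneg _, abs_sub_le_iff.2 ⟨by linarith, by linarith⟩⟩
  have hmin : min (l₁ + l₂) (2 * π - (l₁ + l₂)) ∈ Set.Icc 0 π := by
    refine ⟨le_min (by linarith) (by linarith), ?_⟩
    rcases le_total (l₁ + l₂) π with h | h
    · exact (min_le_left _ _).trans h
    · exact (min_le_right _ _).trans (by linarith)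
  have hcos_min : cos (min (l₁ + l₂) (2 * π - (l₁ + l₂))) = cos (l₁ + l₂) := by
    rcases min_choice (l₁ + l₂) (2 * π - (l₁ + l₂)) with h | h <;> rw [h]
    exact cos_two_pi_sub _
  rw [segment_symm, segment_eq_Icc hle, Set.mem_Icc, ← cos_abs (l₁ - l₂), ← hcos_min,
    strictAntiOn_cos.le_iff_ge hmin h₃, strictAntiOn_cos.le_iff_ge h₃ habs, and_comm]

namespace SU2

noncomputable def toMatrix : SU2 →* Matrix (Fin 2) (Fin 2) ℂ :=
  (unitaryGroup (Fin 2) ℂ).subtype.comp SU2.subtype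

theorem toMatrix_injective : Function.Injective toMatrix :=
  Subtype.val_injective.comp Subtype.val_injective

theorem toMatrix_inv (g : SU2) : toMatrix g⁻¹ = (toMatrix g)ᴴ := rfl

theorem det_toMatrix (g : SU2) : (toMatrix g).det = 1 := g.2

theorem conjTranspose_toMatrix_eq_adjugate (g : SU2) :
    (toMatrix g)ᴴ = adjugate (toMatrix g) :=
  calc (toMatrix g)ᴴ = (toMatrix g)ᴴ * (toMatrix g * adjugate (toMatrix g)) := by
        rw [mul_adjugate, det_toMatrix, one_smul, Matrix.mul_one]
    _ = adjugate (toMatrix g) := by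
        rw [← Matrix.mul_assoc, ← toMatrix_inv, ← map_mul, inv_mul_cancel, map_one,
          Matrix.one_mul]

theorem toMatrix_eta (g : SU2) : toMatrix g =
    !![toMatrix g 0 0, -conj (toMatrix g 1 0); toMatrix g 1 0, conj (toMatrix g 0 0)] := by
  have h := conjTranspose_toMatrix_eq_adjugate g
  have h₀₁ : toMatrix g 0 1 = -conj (toMatrix g 1 0) := by
    have h' := congrFun₂ h 0 1
    simp only [conjTranspose_apply, Complex.star_def, adjugate_fin_two, of_apply, cons_val',
      cons_val_zero, cons_val_one, empty_val', cons_val_fin_one] at h'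
    linear_combination h'
  have h₁₁ : toMatrix g 1 1 = conj (toMatrix g 0 0) := by
    simpa [adjugate_fin_two] using (congrFun₂ h 0 0).symm
  rw [← h₀₁, ← h₁₁]
  exact eta_fin_two _

theorem normSq_toMatrix_zero_zero_add_one_zero (g : SU2) :
    normSq (toMatrix g 0 0) + normSq (toMatrix g 1 0) = 1 := by
  have h := det_toMatrix g
  rw [toMatrix_eta g, det_fin_two_of] at h
  have : ((normSq (toMatrix g 0 0) + normSq (toMatrix g 1 0) : ℝ) : ℂ) = 1 := by
    push_cast [← mul_conj]
    linear_combination h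
  exact_mod_cast this

theorem normSq_toMatrix_entries (k : SU2) :
    normSq (toMatrix k 0 1) = 1 - normSq (toMatrix k 0 0) ∧
      normSq (toMatrix k 1 0) = 1 - normSq (toMatrix k 0 0) ∧
      normSq (toMatrix k 1 1) = normSq (toMatrix k 0 0) := by
  have h := normSq_toMatrix_zero_zero_add_one_zero k
  rw [toMatrix_eta k]
  simp only [of_apply, cons_val', cons_val_zero, cons_val_one, empty_val', cons_val_fin_one,
    normSq_neg, normSq_conj]
  exact ⟨by linarith, by linarith, trivial⟩

noncomputable def ofColumn (a c : ℂ) (h : normSq a + normSq c = 1) : SU2 :=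
  have hdet : det !![a, -conj c; c, conj a] = 1 := by
    rw [det_fin_two_of, neg_mul, sub_neg_eq_add, mul_comm (conj c), mul_conj, mul_conj]
    exact_mod_cast h
  ⟨⟨!![a, -conj c; c, conj a], by
    have hstar : star !![a, -conj c; c, conj a] = adjugate !![a, -conj c; c, conj a] := by
      rw [adjugate_fin_two_of]
      ext i j
      fin_cases i <;> fin_cases j <;> simp
    rw [mem_unitaryGroup_iff', hstar, adjugate_mul, hdet, one_smul]⟩, hdet⟩

theorem toMatrix_ofColumn (a c : ℂ) (h : normSq a + normSq c = 1) :
    toMatrix (ofColumn a c h) = !![a, -conj c; c, conj a] := rfl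

theorem ext_of_mulVec_single {g h : SU2}
    (hgh : toMatrix g *ᵥ Pi.single 0 1 = toMatrix h *ᵥ Pi.single 0 1) : g = h := by
  have h₀ := congrFun hgh 0
  have h₁ := congrFun hgh 1
  simp only [mulVec_single_one, col_apply] at h₀ h₁
  exact toMatrix_injective (by rw [toMatrix_eta g, toMatrix_eta h, h₀, h₁])

theorem toMatrix_su2diag (l : ℝ) :
    toMatrix (su2diag l) = diagonal ![exp (l * I), exp (-(l * I))] := rfl

theorem mem_conjClass_of_mulVec_eq_smul {l : ℝ} {g : SU2} {v : Fin 2 → ℂ}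
    (hv : normSq (v 0) + normSq (v 1) = 1) (hgv : toMatrix g *ᵥ v = exp (l * I) • v) :
    g ∈ conjClass l := by
  set u := ofColumn (v 0) (v 1) hv
  have hu : toMatrix u *ᵥ Pi.single 0 1 = v := by
    ext i; fin_cases i <;> simp [u, toMatrix_ofColumn]
  suffices su2diag l = u⁻¹ * g * u from ⟨u, by rw [this]; group⟩
  apply ext_of_mulVec_single
  calc toMatrix (su2diag l) *ᵥ Pi.single 0 1 = exp (l * I) • Pi.single 0 1 := by
        rw [toMatrix_su2diag, diagonal_mulVec_single, ← Pi.single_smul, smul_eq_mul]; rfl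
    _ = toMatrix (u⁻¹ * g * u) *ᵥ Pi.single 0 1 := by
        rw [map_mul, map_mul, ← mulVec_mulVec, hu, ← mulVec_mulVec, hgv, mulVec_smul, ← hu,
          mulVec_mulVec, ← map_mul, inv_mul_cancel, map_one, one_mulVec]

theorem exists_mulVec_eq_smul_of_trace {l : ℝ} {g : SU2}
    (hg : trace (toMatrix g) = (2 * Real.cos l : ℝ)) :
    ∃ v : Fin 2 → ℂ, normSq (v 0) + normSq (v 1) = 1 ∧ toMatrix g *ᵥ v = exp (l * I) • v := by
  rw [ofReal_two_mul_cos, trace_fin_two] at hg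
  set μ := exp (l * I)
  -- `μ` is a root of the characteristic polynomial `X² - (tr g) X + det g`.
  have hdet : (toMatrix g - μ • 1).det = 0 := by
    have hμ : μ * exp (-(l * I)) = 1 := by rw [← exp_add, add_neg_cancel, exp_zero]
    have := det_toMatrix g
    rw [det_fin_two] at this ⊢
    simp only [Matrix.sub_apply, Matrix.smul_apply, one_apply_eq, one_apply_ne, smul_eq_mul,
      ne_eq, zero_ne_one, one_ne_zero, not_false_eq_true, mul_zero, mul_one, sub_zero]
    linear_combination this - μ * hg - hμ
  obtain ⟨w, hw0, hw⟩ := exists_mulVec_eq_zero_iff.mpr hdet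
  rw [sub_mulVec, smul_mulVec, one_mulVec, sub_eq_zero] at hw
  set s := normSq (w 0) + normSq (w 1)
  have hs : 0 < s := by
    by_contra! hle
    refine hw0 (funext fun i => ?_)
    fin_cases i <;>
      simpa using normSq_eq_zero.mp (by linarith [normSq_nonneg (w 0), normSq_nonneg (w 1)])
  refine ⟨((√s)⁻¹ : ℝ) • w, ?_, by rw [mulVec_smul, hw, smul_comm]⟩
  simp only [Pi.smul_apply, real_smul, normSq_mul, normSq_ofReal]
  rw [← mul_add, ← mul_inv, Real.mul_self_sqrt hs.le, inv_mul_cancel₀ hs.ne']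

theorem trace_toMatrix_inv (g : SU2) : trace (toMatrix g⁻¹) = conj (trace (toMatrix g)) :=
  trace_conjTranspose _

theorem trace_toMatrix_conj (h g : SU2) :
    trace (toMatrix (h * g * h⁻¹)) = trace (toMatrix g) := by
  rw [map_mul, map_mul, trace_mul_cycle, ← map_mul, inv_mul_cancel, map_one, Matrix.one_mul]

theorem trace_su2diag (l : ℝ) : trace (toMatrix (su2diag l)) = (2 * Real.cos l : ℝ) := by
  rw [toMatrix_su2diag, trace_diagonal, Fin.sum_univ_two, ofReal_two_mul_cos]
  rfl

theorem mem_conjClass_iff_trace {l : ℝ} {g : SU2} :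
    g ∈ conjClass l ↔ trace (toMatrix g) = (2 * Real.cos l : ℝ) := by
  refine ⟨?_, fun hg => ?_⟩
  · rintro ⟨h, rfl⟩
    rw [trace_toMatrix_conj, trace_su2diag]
  · obtain ⟨v, hv, hgv⟩ := exists_mulVec_eq_smul_of_trace hg
    exact mem_conjClass_of_mulVec_eq_smul hv hgv

theorem conj_mem_conjClass_iff {l : ℝ} (h g : SU2) :
    h * g * h⁻¹ ∈ conjClass l ↔ g ∈ conjClass l := by
  rw [mem_conjClass_iff_trace, mem_conjClass_iff_trace, trace_toMatrix_conj]

theorem inv_mem_conjClass_iff {l : ℝ} {g : SU2} : g⁻¹ ∈ conjClass l ↔ g ∈ conjClass l := by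
  rw [mem_conjClass_iff_trace, mem_conjClass_iff_trace, trace_toMatrix_inv]
  exact ⟨fun h => by rw [← conj_conj (trace _), h, conj_ofReal], fun h => by rw [h, conj_ofReal]⟩

theorem one_mem_conjClass_mul_conjClass_mul_conjClass_iff (l₁ l₂ l₃ : ℝ) :
    (1 : SU2) ∈ conjClass l₁ * conjClass l₂ * conjClass l₃ ↔
      ∃ k : SU2, su2diag l₁ * (k * su2diag l₂ * k⁻¹) ∈ conjClass l₃ := by
  constructor
  · rintro ⟨_, ⟨_, ⟨u₁, rfl⟩, _, ⟨u₂, rfl⟩, rfl⟩, g₃, hg₃, hprod⟩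
    rw [← inv_eq_of_mul_eq_one_right hprod, inv_mem_conjClass_iff] at hg₃
    refine ⟨u₁⁻¹ * u₂, (conj_mem_conjClass_iff u₁ _).1 ?_⟩
    convert hg₃ using 1
    group
  · rintro ⟨k, hk⟩
    exact ⟨_, Set.mul_mem_mul ⟨1, by group⟩ ⟨k, rfl⟩, _, inv_mem_conjClass_iff.2 hk,
      mul_inv_cancel _⟩

theorem trace_su2diag_mul_conj (l₁ l₂ : ℝ) (k : SU2) :
    trace (toMatrix (su2diag l₁ * (k * su2diag l₂ * k⁻¹))) =
      (2 * ((1 - normSq (toMatrix k 0 0)) * Real.cos (l₁ - l₂) +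
        normSq (toMatrix k 0 0) * Real.cos (l₁ + l₂)) : ℝ) := by
  obtain ⟨h₀₁, h₁₀, h₁₁⟩ := normSq_toMatrix_entries k
  have hsub : 2 * Complex.cos (l₁ - l₂) =
      exp (l₁ * I) * exp (-(l₂ * I)) + exp (-(l₁ * I)) * exp (l₂ * I) := by
    rw [two_cos, ← exp_add, ← exp_add]; ring_nf
  have hadd : 2 * Complex.cos (l₁ + l₂) =
      exp (l₁ * I) * exp (l₂ * I) + exp (-(l₁ * I)) * exp (-(l₂ * I)) := by
    rw [two_cos, ← exp_add, ← exp_add]; ring_nf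
  simp only [map_mul, toMatrix_inv, ← Matrix.mul_assoc, toMatrix_su2diag,
    trace_diagonal_mul_mul_diagonal_mul_conjTranspose, Fin.sum_univ_two, h₀₁, h₁₀, h₁₁,
    cons_val_zero, cons_val_one]
  push_cast
  linear_combination (normSq (toMatrix k 0 0) - 1 : ℂ) * hsub - normSq (toMatrix k 0 0) * hadd

theorem range_normSq_toMatrix_zero_zero :
    Set.range (fun k : SU2 => normSq (toMatrix k 0 0)) = Set.Icc 0 1 := by
  refine Set.Subset.antisymm ?_ fun t ht => ?_
  · rintro _ ⟨k, rfl⟩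
    have := normSq_toMatrix_zero_zero_add_one_zero k
    exact ⟨normSq_nonneg _, by linarith [normSq_nonneg (toMatrix k 1 0)]⟩
  · have h : normSq (√t : ℂ) + normSq (√(1 - t) : ℂ) = 1 := by
      rw [normSq_ofReal, normSq_ofReal, Real.mul_self_sqrt ht.1,
        Real.mul_self_sqrt (sub_nonneg.2 ht.2), add_sub_cancel]
    exact ⟨ofColumn _ _ h, by simp [toMatrix_ofColumn, Real.mul_self_sqrt ht.1]⟩

theorem exists_mem_conjClass_iff_cos_mem_segment (l₁ l₂ l₃ : ℝ) :
    (∃ k : SU2, su2diag l₁ * (k * su2diag l₂ * k⁻¹) ∈ conjClass l₃) ↔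
      Real.cos l₃ ∈ segment ℝ (Real.cos (l₁ - l₂)) (Real.cos (l₁ + l₂)) := by
  rw [segment_eq_image, ← range_normSq_toMatrix_zero_zero, Set.mem_image, Set.exists_range_iff]
  refine exists_congr fun k => ?_
  rw [mem_conjClass_iff_trace, trace_su2diag_mul_conj, ofReal_inj, mul_right_inj' two_ne_zero,
    smul_eq_mul, smul_eq_mul]

end SU2

/-- For `λ₁, λ₂, λ₃ ∈ [0, π]`, the identity belongs to `C(λ₁)C(λ₂)C(λ₃)`
iff `|λ₁ − λ₂| ≤ λ₃ ≤ min(λ₁ + λ₂, 2π − (λ₁ + λ₂))`. -/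
theorem one_mem_triple_classProd_iff (l₁ l₂ l₃ : ℝ)
    (h₁ : l₁ ∈ Set.Icc 0 Real.pi) (h₂ : l₂ ∈ Set.Icc 0 Real.pi)
    (h₃ : l₃ ∈ Set.Icc 0 Real.pi) :
    (1 : SU2) ∈ conjClass l₁ * conjClass l₂ * conjClass l₃ ↔
      |l₁ - l₂| ≤ l₃ ∧ l₃ ≤ min (l₁ + l₂) (2 * Real.pi - (l₁ + l₂)) := by
  rw [SU2.one_mem_conjClass_mul_conjClass_mul_conjClass_iff,
    SU2.exists_mem_conjClass_iff_cos_mem_segment,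
    Real.cos_mem_segment_cos_sub_cos_add_iff h₁ h₂ h₃]
end

section
/- Let n ≥ 2 be an integer and λ₁, …, λ_{n+1} ∈ [0, π]. If the identity matrix I belongs to the set product C(λ₁)⋯C(λ_{n+1}) in SU(2), then for every integer j with 0 ≤ j ≤ n/2 and every choice of signs ε₁, …, ε_{n+1} ∈ {+1, −1} with exactly n − 2j of the ε_i equal to −1, one has ∑_{i=1}^{n+1} ε_i λ_i ≤ 2jπ. -/
/-! For `g ∈ SU(2)` let `θ(g) = arccos (tr g / 2) ∈ [0, π]`, so that `θ = λ` on `C(λ)`. Viewing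
`SU(2)` as the unit sphere `S³`, `θ(g)` is the great-circle distance from `1` to `g`, hence
`θ(gh) ≤ θ(g) + θ(h)`.
Given `g₁ ⋯ g_{n+1} = 1` with `gᵢ ∈ C(λᵢ)`, negate the `2j + 1` factors with `εᵢ = 1`: they land in
`C(π - λᵢ)` and the product becomes `-1`, of angle `π`. Subadditivity then gives
`π ≤ ∑_{εᵢ = 1} (π - λᵢ) + ∑_{εᵢ = -1} λᵢ = (2j + 1)π - ∑ εᵢ λᵢ`. -/

open Matrix Complex Pointwise

lemma List.prod_ofFn_mul_pow_of_commute {M : Type*} [Monoid M] {z : M}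
    (hz : ∀ x, Commute z x) {m : ℕ} (f : Fin m → M) (e : Fin m → ℕ) :
    (List.ofFn fun i => f i * z ^ e i).prod = (List.ofFn f).prod * z ^ ∑ i, e i := by
  induction m with
  | zero => simp
  | succ m ih =>
    rw [List.ofFn_succ, List.prod_cons, ih, List.ofFn_succ, List.prod_cons, Fin.sum_univ_succ,
      pow_add, mul_assoc, ← mul_assoc (z ^ e 0), ((hz _).pow_left _).eq]
    simp only [mul_assoc]

lemma Finset.card_filter_eq_one_add_card_filter_eq_neg_one {ι : Type*} [Fintype ι]
    (ε : ι → ℝ) (hε : ∀ i, ε i = 1 ∨ ε i = -1) :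
    (univ.filter fun i => ε i = 1).card + (univ.filter fun i => ε i = -1).card =
      Fintype.card ι := by
  classical
  have hneg : (univ.filter fun i => ε i = -1) = univ.filter fun i => ¬ε i = 1 :=
    Finset.filter_congr fun i _ => by rcases hε i with h | h <;> simp [h] <;> norm_num
  rw [hneg, Finset.card_filter_add_card_filter_not, Finset.card_univ]

namespace SU2

noncomputable def mat (g : SU2) : Matrix (Fin 2) (Fin 2) ℂ := g.1.1

@[simp] lemma mat_mul (g h : SU2) : mat (g * h) = mat g * mat h := rfl

@[simp] lemma mat_one : mat 1 = 1 := rfl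

lemma mat_injective : Function.Injective mat := fun _ _ h =>
  Subtype.coe_injective (Subtype.coe_injective h)

lemma conjTranspose_mat (g : SU2) : (mat g)ᴴ = adjugate (mat g) :=
  left_inv_eq_right_inv (Matrix.mem_unitaryGroup_iff'.mp g.1.2)
    (by rw [mul_adjugate, show det (mat g) = 1 from g.2, one_smul])

lemma mat_one_one (g : SU2) : mat g 1 1 = starRingEnd ℂ (mat g 0 0) := by
  simpa [adjugate_fin_two] using (congrFun₂ (conjTranspose_mat g) 0 0).symm

lemma mat_one_zero (g : SU2) : mat g 1 0 = -starRingEnd ℂ (mat g 0 1) := by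
  have h := congrArg (starRingEnd ℂ) (congrFun₂ (conjTranspose_mat g) 1 0)
  simp [adjugate_fin_two] at h
  simp [h]

lemma sq_add_sq_add_sq_add_sq (g : SU2) :
    (mat g 0 0).re ^ 2 + (mat g 0 0).im ^ 2 + (mat g 0 1).re ^ 2 + (mat g 0 1).im ^ 2 = 1 := by
  have h := congrArg Complex.re (show det (mat g) = 1 from g.2)
  rw [det_fin_two, mat_one_one, mat_one_zero] at h
  simp at h
  linarith

noncomputable def halfTrace (g : SU2) : ℝ := (trace (mat g)).re / 2

lemma halfTrace_eq_re (g : SU2) : halfTrace g = (mat g 0 0).re := by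
  simp [halfTrace, trace_fin_two, mat_one_one]

lemma halfTrace_mem_Icc (g : SU2) : halfTrace g ∈ Set.Icc (-1 : ℝ) 1 := by
  rw [halfTrace_eq_re, Set.mem_Icc, ← abs_le, ← sq_le_one_iff_abs_le_one]
  nlinarith [sq_add_sq_add_sq_add_sq g]

lemma halfTrace_conj (g h : SU2) : halfTrace (h * g * h⁻¹) = halfTrace g := by
  rw [halfTrace, mat_mul, mat_mul, trace_mul_cycle, ← mat_mul, inv_mul_cancel, mat_one, one_mul,
    halfTrace]

lemma halfTrace_su2diag (l : ℝ) : halfTrace (su2diag l) = Real.cos l := by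
  have h : -((l : ℂ) * I) = ((-l : ℝ) : ℂ) * I := by push_cast; ring
  simp only [halfTrace, mat, su2diag, trace_fin_two, diagonal_apply_eq, Matrix.cons_val_zero,
    Matrix.cons_val_one, h, Complex.add_re, exp_ofReal_mul_I_re, Real.cos_neg]
  ring

/-- Writing `g = [[a, b], [-b̄, ā]]` and `h = [[c, d], [-d̄, c̄]]`, this is Cauchy–Schwarz for
`(Im a, b)` and `(Im c, d)` in `ℝ³`. -/
lemma halfTrace_mul_ge (g h : SU2) :
    halfTrace g * halfTrace h - √(1 - halfTrace g ^ 2) * √(1 - halfTrace h ^ 2) ≤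
      halfTrace (g * h) := by
  have hg := sq_add_sq_add_sq_add_sq g
  have hh := sq_add_sq_add_sq_add_sq h
  set a := mat g 0 0
  set b := mat g 0 1
  set c := mat h 0 0
  set d := mat h 0 1
  have hgh : halfTrace (g * h) = a.re * c.re - (a.im * c.im + b.re * d.re + b.im * d.im) := by
    simp [halfTrace_eq_re, Matrix.mul_apply, Fin.sum_univ_two, mat_one_zero h, a, b, c, d]
    ring
  have hdot : a.im * c.im + b.re * d.re + b.im * d.im ≤
      √(a.im ^ 2 + b.re ^ 2 + b.im ^ 2) * √(c.im ^ 2 + d.re ^ 2 + d.im ^ 2) := by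
    rw [← Real.sqrt_mul (by positivity)]
    refine (le_abs_self _).trans (Real.abs_le_sqrt ?_)
    nlinarith [sq_nonneg (a.im * d.re - b.re * c.im), sq_nonneg (a.im * d.im - b.im * c.im),
      sq_nonneg (b.re * d.im - b.im * d.re)]
  rw [hgh, halfTrace_eq_re, halfTrace_eq_re,
    show 1 - a.re ^ 2 = a.im ^ 2 + b.re ^ 2 + b.im ^ 2 by linarith,
    show 1 - c.re ^ 2 = c.im ^ 2 + d.re ^ 2 + d.im ^ 2 by linarith]
  linarith

noncomputable def angle (g : SU2) : ℝ := Real.arccos (halfTrace g)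

lemma angle_le_pi (g : SU2) : angle g ≤ Real.pi := Real.arccos_le_pi _

lemma cos_angle (g : SU2) : Real.cos (angle g) = halfTrace g :=
  Real.cos_arccos (halfTrace_mem_Icc g).1 (halfTrace_mem_Icc g).2

lemma angle_one : angle 1 = 0 := by
  simp [angle, halfTrace]

lemma angle_mul_le (g h : SU2) : angle (g * h) ≤ angle g + angle h := by
  rcases le_or_gt (angle g + angle h) Real.pi with hπ | hπ
  · have hcos : Real.cos (angle g + angle h) ≤ halfTrace (g * h) := by
      rw [Real.cos_add, cos_angle, cos_angle, angle, angle, Real.sin_arccos, Real.sin_arccos]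
      exact halfTrace_mul_ge g h
    calc angle (g * h) ≤ Real.arccos (Real.cos (angle g + angle h)) := Real.arccos_le_arccos hcos
      _ = angle g + angle h :=
        Real.arccos_cos (add_nonneg (Real.arccos_nonneg _) (Real.arccos_nonneg _)) hπ
  · exact (angle_le_pi _).trans hπ.le

lemma angle_prod_le (L : List SU2) : angle L.prod ≤ (L.map angle).sum := by
  induction L with
  | nil => simp [angle_one]
  | cons g L ih =>
    simpa using (angle_mul_le g L.prod).trans (add_le_add_right ih _)

lemma angle_of_mem_conjClass {l : ℝ} (hl : l ∈ Set.Icc 0 Real.pi) {g : SU2}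
    (hg : g ∈ conjClass l) : angle g = l := by
  obtain ⟨h, rfl⟩ := hg
  rw [angle, halfTrace_conj, halfTrace_su2diag, Real.arccos_cos hl.1 hl.2]

noncomputable def negOne : SU2 := su2diag Real.pi

lemma mat_negOne : mat negOne = -1 := by
  ext i j
  fin_cases i <;> fin_cases j <;>
    simp [negOne, mat, su2diag, exp_neg, exp_pi_mul_I]

lemma negOne_commute (g : SU2) : Commute negOne g :=
  mat_injective (by simp [mat_negOne])

lemma negOne_mul_self : negOne * negOne = 1 :=
  mat_injective (by simp [mat_negOne])

lemma angle_negOne : angle negOne = Real.pi :=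
  angle_of_mem_conjClass ⟨Real.pi_pos.le, le_rfl⟩ ⟨1, by simp [negOne]⟩

lemma angle_mul_negOne (g : SU2) : angle (g * negOne) = Real.pi - angle g := by
  rw [angle, halfTrace_eq_re, mat_mul, mat_negOne]
  simp [← halfTrace_eq_re, Real.arccos_neg, angle]

end SU2

open SU2 in
theorem one_mem_classProd_necessary_general (n : ℕ) (l : Fin (n + 1) → ℝ)
    (hl : ∀ i, l i ∈ Set.Icc 0 Real.pi)
    (h1 : (1 : SU2) ∈ classProd l) :
    ∀ j : ℕ, 2 * j ≤ n →
      ∀ ε : Fin (n + 1) → ℝ, (∀ i, ε i = 1 ∨ ε i = -1) →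
        (Finset.univ.filter fun i => ε i = -1).card = n - 2 * j →
        ∑ i, ε i * l i ≤ 2 * j * Real.pi := by
  intro j hj ε hε hcard
  obtain ⟨g, hg⟩ := Set.mem_prod_list_ofFn.mp h1
  have hplus : (Finset.univ.filter fun i => ε i = 1).card = 2 * j + 1 := by
    have := Finset.card_filter_eq_one_add_card_filter_eq_neg_one ε hε
    rw [hcard, Fintype.card_fin] at this
    omega
  let D i := (g i : SU2) * negOne ^ (if ε i = 1 then 1 else 0)
  have hD : (List.ofFn D).prod = negOne := by
    rw [List.prod_ofFn_mul_pow_of_commute negOne_commute, hg, one_mul, Finset.sum_boole,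
      Nat.cast_id, hplus, pow_succ, pow_mul, sq, negOne_mul_self, one_pow, one_mul]
  have hterm i : angle (D i) + ε i * l i = if ε i = 1 then Real.pi else 0 := by
    rcases hε i with h | h <;>
      simp [D, h, show (-1 : ℝ) ≠ 1 by norm_num, angle_mul_negOne,
        angle_of_mem_conjClass (hl i) (g i).2]
  have hπ : Real.pi ≤ ∑ i, angle (D i) := by
    have := angle_prod_le (List.ofFn D)
    rwa [hD, angle_negOne, List.map_ofFn, List.sum_ofFn] at this
  have hsum : ∑ i, (angle (D i) + ε i * l i) = (2 * j + 1) * Real.pi := by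
    simp [hterm, Finset.sum_ite, hplus]
  rw [Finset.sum_add_distrib] at hsum
  linarith

/-- For `n ≥ 2` and `λ₁, …, λ_{n+1} ∈ [0, π]`, if the identity belongs to
`C(λ₁)⋯C(λ_{n+1})` then for every `j` with `0 ≤ j ≤ n/2` and every choice of signs
`ε_i ∈ {1, −1}` with exactly `n − 2j` of them equal to `−1`, one has
`∑ ε_i λ_i ≤ 2jπ`. -/
theorem one_mem_classProd_necessary (n : ℕ) (hn : 2 ≤ n) (l : Fin (n + 1) → ℝ)
    (hl : ∀ i, l i ∈ Set.Icc 0 Real.pi)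
    (h1 : (1 : SU2) ∈ classProd l) :
    ∀ j : ℕ, 2 * j ≤ n →
      ∀ ε : Fin (n + 1) → ℝ, (∀ i, ε i = 1 ∨ ε i = -1) →
        (Finset.univ.filter fun i => ε i = -1).card = n - 2 * j →
        ∑ i, ε i * l i ≤ 2 * j * Real.pi :=
  one_mem_classProd_necessary_general n l hl h1
end

section
/- Let n ≥ 2 be an integer and λ₁, …, λ_n ∈ [0, π]. If the set product C(λ₁)⋯C(λ_n) equals all of SU(2), then for every integer j with 0 ≤ j < n/2 and every choice of signs ε₁, …, ε_n ∈ {+1, −1} with exactly j of the ε_i equal to −1, one has −(j − 1)π ≤ ∑_{i=1}^{n} ε_i λ_i ≤ (n − j − 1)π. -/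
open Matrix Complex Pointwise

/-!
Let `θ(g) = arccos (Re g₀₀) ∈ [0, π]`, so that `g ∈ C(θ(g))`. Viewing `SU(2)` as the unit
quaternions, `θ` is the angular distance to `1` on `S³`, hence subadditive:
`θ(gh) ≤ θ(g) + θ(h)`. So every element of `C(μ₁)⋯C(μₙ)` with `μᵢ ∈ [0, π]` has angle at most
`∑ μᵢ`, and as `θ(-1) = π`, `-1 ∈ C(μ₁)⋯C(μₙ)` forces `∑ μᵢ ≥ π`.

Since `-C(λ) = C(π - λ)` and `-1` is central, replacing some `λᵢ` by `π - λᵢ` only multiplies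
the product by a power of `-1`, so it still is all of `SU(2)`. Taking `μᵢ = λᵢ` or `π - λᵢ`
according as `εᵢ = 1` or `-1`, and then the complementary choice, gives
`∑ εᵢλᵢ + jπ ≥ π` and `(n - j)π - ∑ εᵢλᵢ ≥ π`.
-/

open scoped Real ComplexConjugate

noncomputable def mat (g : SU2) : Matrix (Fin 2) (Fin 2) ℂ :=
  ((g : unitaryGroup (Fin 2) ℂ) : Matrix (Fin 2) (Fin 2) ℂ)

lemma mat_injective : Function.Injective mat :=
  fun _ _ h => Subtype.ext (Subtype.ext h)

@[simp] lemma mat_mul (g h : SU2) : mat (g * h) = mat g * mat h := rfl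

@[simp] lemma mat_one : mat 1 = 1 := rfl

lemma mat_su2diag (t : ℝ) :
    mat (su2diag t) = diagonal ![Complex.exp (t * I), Complex.exp (-(t * I))] := rfl

lemma mat_entries (g : SU2) :
    mat g 1 1 = conj (mat g 0 0) ∧ mat g 1 0 = -conj (mat g 0 1) ∧
      normSq (mat g 0 0) + normSq (mat g 0 1) = 1 := by
  have hunit : mat g * (mat g)ᴴ = 1 := by
    simpa [mat, star_eq_conjTranspose] using (Unitary.mem_iff.mp g.1.2).2
  have hdet : det (mat g) = 1 := g.2
  set a := mat g 0 0; set b := mat g 0 1; set c := mat g 1 0; set d := mat g 1 1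
  have e1 : a * conj a + b * conj b = 1 := by
    simpa [mul_apply, Fin.sum_univ_two] using congrFun (congrFun hunit 0) 0
  have e2 : c * conj a + d * conj b = 0 := by
    simpa [mul_apply, Fin.sum_univ_two] using congrFun (congrFun hunit 1) 0
  have e3 : a * d - b * c = 1 := by rwa [det_fin_two] at hdet
  refine ⟨by linear_combination conj a * e3 - d * e1 + b * e2,
    by linear_combination -conj b * e3 + a * e2 - c * e1, ?_⟩
  rw [mul_conj, mul_conj] at e1
  exact_mod_cast e1

lemma re_mat_mem_Icc (g : SU2) : (mat g 0 0).re ∈ Set.Icc (-1) 1 := by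
  have h := (mat_entries g).2.2
  rw [normSq_apply, normSq_apply] at h
  constructor <;> nlinarith

/-- The `λ ∈ [0, π]` with `g ∈ C(λ)`. -/
noncomputable def angle (g : SU2) : ℝ := Real.arccos (mat g 0 0).re

lemma re_mat_of_mem_conjClass {t : ℝ} {g : SU2} (hg : g ∈ conjClass t) :
    (mat g 0 0).re = Real.cos t := by
  obtain ⟨h, rfl⟩ := hg
  have htrace : trace (mat (h * su2diag t * h⁻¹)) = 2 * Real.cos t := by
    rw [mat_mul, mat_mul, trace_mul_cycle, ← mat_mul, inv_mul_cancel, mat_one, Matrix.one_mul,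
      mat_su2diag, trace_diagonal, Fin.sum_univ_two]
    simp [Complex.two_cos]
  rw [trace_fin_two, (mat_entries _).1, add_conj] at htrace
  exact mul_left_cancel₀ two_ne_zero (by exact_mod_cast htrace)

lemma angle_of_mem_conjClass {t : ℝ} (ht : t ∈ Set.Icc 0 π) {g : SU2}
    (hg : g ∈ conjClass t) : angle g = t := by
  rw [angle, re_mat_of_mem_conjClass hg, Real.arccos_cos ht.1 ht.2]

lemma angle_one : angle 1 = 0 := by simp [angle]

-- Cauchy–Schwarz in `ℝ³` for the imaginary quaternion parts of `A` and `B`.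
lemma cos_angle_add_angle_le (A B : SU2) :
    Real.cos (angle A + angle B) ≤ (mat (A * B) 0 0).re := by
  obtain ⟨-, hA10, hA⟩ := mat_entries A
  obtain ⟨-, hB10, hB⟩ := mat_entries B
  obtain ⟨hA1, hA2⟩ := re_mat_mem_Icc A
  obtain ⟨hB1, hB2⟩ := re_mat_mem_Icc B
  set a := mat A 0 0; set b := mat A 0 1; set c := mat B 0 0; set d := mat B 0 1
  have hAB : mat (A * B) 0 0 = a * c - b * conj d := by
    rw [mat_mul, mul_apply, Fin.sum_univ_two, hB10]; ring
  have hsA : 1 - a.re ^ 2 = a.im ^ 2 + b.re ^ 2 + b.im ^ 2 := by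
    rw [normSq_apply, normSq_apply] at hA; linarith
  have hsB : 1 - c.re ^ 2 = c.im ^ 2 + d.re ^ 2 + d.im ^ 2 := by
    rw [normSq_apply, normSq_apply] at hB; linarith
  have hcs := Real.sum_mul_le_sqrt_mul_sqrt Finset.univ ![a.im, b.re, b.im] ![c.im, d.re, d.im]
  simp only [Fin.sum_univ_three, Matrix.cons_val_zero, Matrix.cons_val_one,
    Matrix.cons_val_two, Matrix.tail_cons, Matrix.head_cons] at hcs
  rw [angle, angle, Real.cos_add, Real.cos_arccos hA1 hA2, Real.cos_arccos hB1 hB2,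
    Real.sin_arccos, Real.sin_arccos, hsA, hsB, hAB]
  simp only [sub_re, mul_re, conj_re, conj_im]
  linarith

lemma angle_mul_le (A B : SU2) : angle (A * B) ≤ angle A + angle B := by
  rcases le_or_gt (angle A + angle B) π with h | h
  · calc angle (A * B) ≤ Real.arccos (Real.cos (angle A + angle B)) :=
          Real.arccos_le_arccos (cos_angle_add_angle_le A B)
      _ = angle A + angle B :=
          Real.arccos_cos (add_nonneg (Real.arccos_nonneg _) (Real.arccos_nonneg _)) h
  · exact (Real.arccos_le_pi _).trans h.le

noncomputable def negOne : SU2 := su2diag π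

lemma mat_negOne : mat negOne = -1 := by
  rw [negOne, mat_su2diag]
  ext i j
  fin_cases i <;> fin_cases j <;> simp [Complex.exp_neg, Complex.exp_pi_mul_I]

lemma angle_negOne : angle negOne = π := by simp [angle, mat_negOne]

lemma negOne_commute (g : SU2) : Commute negOne g :=
  mat_injective <| by simp [mat_negOne]

lemma negOne_mul_su2diag (t : ℝ) : negOne * su2diag t = su2diag (t - π) := by
  apply mat_injective
  rw [mat_mul, mat_negOne, mat_su2diag, mat_su2diag]
  ext i j
  fin_cases i <;> fin_cases j <;>
    simp [sub_mul, Complex.exp_sub, Complex.exp_neg, Complex.exp_pi_mul_I, div_neg, neg_div,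
      one_div]

noncomputable def weyl : SU2 :=
  ⟨⟨!![0, 1; -1, 0], by
    rw [mem_unitaryGroup_iff, star_eq_conjTranspose]
    ext i j
    fin_cases i <;> fin_cases j <;> simp [mul_apply, Fin.sum_univ_two]⟩, by
    rw [mem_SU2_iff, det_fin_two_of]; norm_num⟩

lemma weyl_mul_su2diag (t : ℝ) : weyl * su2diag t = su2diag (-t) * weyl := by
  apply mat_injective
  rw [mat_mul, mat_mul, mat_su2diag, mat_su2diag, show mat weyl = !![0, 1; -1, 0] from rfl]
  ext i j
  fin_cases i <;> fin_cases j <;> simp [mul_apply, Fin.sum_univ_two]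

lemma negOne_mul_mem_conjClass {t : ℝ} {g : SU2} (hg : g ∈ conjClass t) :
    negOne * g ∈ conjClass (π - t) := by
  obtain ⟨h, rfl⟩ := hg
  refine ⟨h * weyl, ?_⟩
  have hw : weyl * su2diag (π - t) * weyl⁻¹ = negOne * su2diag t := by
    rw [weyl_mul_su2diag, mul_inv_cancel_right, negOne_mul_su2diag, neg_sub]
  calc h * weyl * su2diag (π - t) * (h * weyl)⁻¹
      = h * (weyl * su2diag (π - t) * weyl⁻¹) * h⁻¹ := by group
    _ = negOne * (h * su2diag t * h⁻¹) := by
      rw [hw, ← mul_assoc h, ← (negOne_commute h).eq]; group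

lemma classProd_zero (l : Fin 0 → ℝ) : classProd l = 1 := rfl

lemma classProd_succ {n : ℕ} (l : Fin (n + 1) → ℝ) :
    classProd l = conjClass (l 0) * classProd (Fin.tail l) := by
  rw [classProd, List.ofFn_succ, List.prod_cons]
  rfl

lemma angle_le_sum_of_mem_classProd {n : ℕ} {l : Fin n → ℝ} (hl : ∀ i, l i ∈ Set.Icc 0 π)
    {g : SU2} (hg : g ∈ classProd l) : angle g ≤ ∑ i, l i := by
  induction n generalizing g with
  | zero =>
    rw [classProd_zero, Set.mem_one] at hg
    simp [hg, angle_one]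
  | succ n ih =>
    rw [classProd_succ, Set.mem_mul] at hg
    obtain ⟨a, ha, y, hy, rfl⟩ := hg
    calc angle (a * y) ≤ angle a + angle y := angle_mul_le a y
      _ ≤ l 0 + ∑ i, Fin.tail l i :=
          add_le_add (angle_of_mem_conjClass (hl 0) ha).le (ih (fun i => hl i.succ) hy)
      _ = ∑ i, l i := (Fin.sum_univ_succ l).symm

lemma exists_pow_mul_mem_classProd {n : ℕ} {l μ : Fin n → ℝ}
    (hμ : ∀ i, μ i = l i ∨ μ i = π - l i) :
    ∃ k : ℕ, ∀ x ∈ classProd l, negOne ^ k * x ∈ classProd μ := by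
  induction n with
  | zero => exact ⟨0, fun x hx => by simpa [classProd_zero] using hx⟩
  | succ n ih =>
    obtain ⟨k, hk⟩ := ih (l := Fin.tail l) (μ := Fin.tail μ) fun i => hμ i.succ
    have hcomm (a : SU2) : Commute a (negOne ^ k) := ((negOne_commute a).pow_left k).symm
    simp_rw [classProd_succ, Set.mem_mul]
    rcases hμ 0 with h0 | h0
    · refine ⟨k, ?_⟩
      rintro _ ⟨a, ha, y, hy, rfl⟩
      exact ⟨a, h0 ▸ ha, _, hk y hy, (hcomm a).left_comm y⟩
    · refine ⟨k + 1, ?_⟩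
      rintro _ ⟨a, ha, y, hy, rfl⟩
      refine ⟨negOne * a, h0 ▸ negOne_mul_mem_conjClass ha, _, hk y hy, ?_⟩
      simp only [pow_succ', mul_assoc, (hcomm a).left_comm]

lemma pi_le_sum_of_classProd_eq_univ {n : ℕ} {l : Fin n → ℝ} (hl : ∀ i, l i ∈ Set.Icc 0 π)
    (hsurj : classProd l = Set.univ) {μ : Fin n → ℝ} (hμ : ∀ i, μ i = l i ∨ μ i = π - l i) :
    π ≤ ∑ i, μ i := by
  have hμI (i : Fin n) : μ i ∈ Set.Icc 0 π := by
    obtain ⟨h0, hπ⟩ := hl i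
    rcases hμ i with h | h <;> rw [h] <;> constructor <;> linarith
  obtain ⟨k, hk⟩ := exists_pow_mul_mem_classProd hμ
  have hmem := hk ((negOne ^ k)⁻¹ * negOne) (hsurj ▸ Set.mem_univ _)
  rw [mul_inv_cancel_left] at hmem
  simpa [angle_negOne] using angle_le_sum_of_mem_classProd hμI hmem

lemma sum_one_sub_eq_two_mul_card {ι : Type*} (s : Finset ι) {ε : ι → ℝ}
    (hε : ∀ i, ε i = 1 ∨ ε i = -1) :
    ∑ i ∈ s, (1 - ε i) = 2 * (s.filter fun i => ε i = -1).card := by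
  calc ∑ i ∈ s, (1 - ε i) = ∑ i ∈ s, 2 * (if ε i = -1 then 1 else 0) :=
        Finset.sum_congr rfl fun i _ => by rcases hε i with h | h <;> norm_num [h]
    _ = _ := by rw [← Finset.mul_sum, Finset.sum_boole]

theorem classProd_eq_univ_necessary_general (n : ℕ) (l : Fin n → ℝ)
    (hl : ∀ i, l i ∈ Set.Icc 0 Real.pi)
    (hsurj : classProd l = Set.univ) :
    ∀ j : ℕ, 2 * j < n →
      ∀ ε : Fin n → ℝ, (∀ i, ε i = 1 ∨ ε i = -1) →
        (Finset.univ.filter fun i => ε i = -1).card = j →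
        -(((j : ℝ) - 1) * Real.pi) ≤ ∑ i, ε i * l i ∧
          ∑ i, ε i * l i ≤ ((n : ℝ) - j - 1) * Real.pi := by
  intro j _ ε hε hcard
  -- `μᵢ` is `λᵢ` or `π - λᵢ` according as `εᵢ = 1` or `-1`.
  set μ : Fin n → ℝ := fun i => ε i * l i + (1 - ε i) / 2 * π
  have hμ (i : Fin n) : μ i = l i ∨ μ i = π - l i := by
    rcases hε i with h | h <;> simp only [μ, h] <;> [left; right] <;> ring
  have hν (i : Fin n) : π - μ i = l i ∨ π - μ i = π - l i := by
    rcases hμ i with h | h <;> rw [h] <;> [right; left] <;> ring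
  have hsumμ : ∑ i, μ i = ∑ i, ε i * l i + j * π := by
    rw [Finset.sum_add_distrib, ← Finset.sum_mul, ← Finset.sum_div,
      sum_one_sub_eq_two_mul_card _ hε, hcard]
    ring
  have h1 := pi_le_sum_of_classProd_eq_univ hl hsurj hμ
  have h2 := pi_le_sum_of_classProd_eq_univ hl hsurj hν
  rw [Finset.sum_sub_distrib, Finset.sum_const, Finset.card_univ, Fintype.card_fin,
    nsmul_eq_mul] at h2
  constructor <;> linarith

/-- For `n ≥ 2` and `λ₁, …, λ_n ∈ [0, π]`, if `C(λ₁)⋯C(λ_n) = SU(2)` then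
for every `j` with `0 ≤ j < n/2` and every choice of signs `ε_i ∈ {1, −1}` with exactly
`j` of them equal to `−1`, one has `−(j − 1)π ≤ ∑ ε_i λ_i ≤ (n − j − 1)π`. -/
theorem classProd_eq_univ_necessary (n : ℕ) (hn : 2 ≤ n) (l : Fin n → ℝ)
    (hl : ∀ i, l i ∈ Set.Icc 0 Real.pi)
    (hsurj : classProd l = Set.univ) :
    ∀ j : ℕ, 2 * j < n →
      ∀ ε : Fin n → ℝ, (∀ i, ε i = 1 ∨ ε i = -1) →
        (Finset.univ.filter fun i => ε i = -1).card = j →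
        -(((j : ℝ) - 1) * Real.pi) ≤ ∑ i, ε i * l i ∧
          ∑ i, ε i * l i ≤ ((n : ℝ) - j - 1) * Real.pi :=
  classProd_eq_univ_necessary_general n l hl hsurj
end
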